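/- Suppose V : ℝ≥0 × ℝ≥0 → ℝ satisfies, for all x,y ≥ 0 and h > 0, the two-sided bounds a₁h ≤ V(x+h,y) − V(x,y) ≤ (e^{(δ+λ)h/p₁} − 1)·V(x,y) and a₂h ≤ V(x,y+h) − V(x,y) ≤ (e^{(δ+λ)h/p₂} − 1)·V(x,y), and V is nonnegative and bounded on compact sets. Then V is locally Lipschitz on the first quadrant. -/
import Mathlib


/-- Two-sided increment bounds imply local Lipschitz continuity on the first quadrant. -/
theorem stmt_1 (δ lam p₁ p₂ a₁ a₂ : ℝ) (hδ : 0 < δ) (hlam : 0 < lam)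
    (hp₁ : 0 < p₁) (hp₂ : 0 < p₂) (ha₁ : 0 ≤ a₁) (ha₂ : 0 ≤ a₂)
    (V : ℝ → ℝ → ℝ)
    (hnonneg : ∀ x y : ℝ, 0 ≤ x → 0 ≤ y → 0 ≤ V x y)
    (hincx : ∀ x y h : ℝ, 0 ≤ x → 0 ≤ y → 0 < h →
      a₁ * h ≤ V (x + h) y - V x y ∧
      V (x + h) y - V x y ≤ (Real.exp ((δ + lam) * h / p₁) - 1) * V x y)
    (hincy : ∀ x y h : ℝ, 0 ≤ x → 0 ≤ y → 0 < h →
      a₂ * h ≤ V x (y + h) - V x y ∧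
      V x (y + h) - V x y ≤ (Real.exp ((δ + lam) * h / p₂) - 1) * V x y)
    (hbdd : ∀ K : Set (ℝ × ℝ), K ⊆ {q : ℝ × ℝ | 0 ≤ q.1 ∧ 0 ≤ q.2} → IsCompact K →
      ∃ M : ℝ, ∀ q ∈ K, V q.1 q.2 ≤ M) :
    ∀ K : Set (ℝ × ℝ), K ⊆ {q : ℝ × ℝ | 0 ≤ q.1 ∧ 0 ≤ q.2} → IsCompact K →
      ∃ L : ℝ, 0 ≤ L ∧ ∀ q ∈ K, ∀ q' ∈ K,
        |V q.1 q.2 - V q'.1 q'.2| ≤ L * (|q.1 - q'.1| + |q.2 - q'.2|) := by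
  intro K hKsub hKcomp
  -- bound K in a box [0,R] × [0,R]
  obtain ⟨r, hr⟩ := hKcomp.isBounded.subset_closedBall 0
  set R : ℝ := max r 0 with hRdef
  have hR0 : (0:ℝ) ≤ R := le_max_right _ _
  have hbox : ∀ q ∈ K, q.1 ∈ Set.Icc (0:ℝ) R ∧ q.2 ∈ Set.Icc (0:ℝ) R := by
    intro q hq
    have h1 := (hKsub hq).1
    have h2 := (hKsub hq).2
    have hd : dist q 0 ≤ r := hr hq
    rw [Prod.dist_eq] at hd
    have hd1 : |q.1| ≤ r := by
      calc |q.1| = dist q.1 (0:ℝ) := by simp [Real.dist_eq]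
        _ ≤ r := le_trans (le_max_left _ _) hd
    have hd2 : |q.2| ≤ r := by
      calc |q.2| = dist q.2 (0:ℝ) := by simp [Real.dist_eq]
        _ ≤ r := le_trans (le_max_right _ _) hd
    constructor
    · exact ⟨h1, le_trans (le_trans (le_abs_self _) hd1) (le_max_left _ _)⟩
    · exact ⟨h2, le_trans (le_trans (le_abs_self _) hd2) (le_max_left _ _)⟩
  -- bound V on the box
  obtain ⟨M, hM⟩ := hbdd (Set.Icc (0:ℝ) R ×ˢ Set.Icc (0:ℝ) R)
    (by rintro ⟨x, y⟩ ⟨hx, hy⟩; exact ⟨hx.1, hy.1⟩)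
    (isCompact_Icc.prod isCompact_Icc)
  set M' : ℝ := max M 0 with hM'def
  have hM'0 : (0:ℝ) ≤ M' := le_max_right _ _
  have hMV : ∀ x y : ℝ, x ∈ Set.Icc (0:ℝ) R → y ∈ Set.Icc (0:ℝ) R → V x y ≤ M' := by
    intro x y hx hy
    exact le_trans (hM (x, y) ⟨hx, hy⟩) (le_max_left _ _)
  set c : ℝ := δ + lam with hcdef
  have hc : 0 < c := by positivity
  -- linear bound on exp
  have hexp : ∀ p : ℝ, 0 < p → ∀ h : ℝ, 0 < h → h ≤ R →
      Real.exp (c * h / p) - 1 ≤ c / p * Real.exp (c * R / p) * h := by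
    intro p hp h hh hhR
    set τ : ℝ := c * h / p with hτdef
    have hτ0 : 0 < τ := by positivity
    have h1 : Real.exp τ - 1 ≤ τ * Real.exp τ := by
      have h2 := Real.add_one_le_exp (-τ)
      rw [Real.exp_neg] at h2
      have h3 : (-τ + 1) * Real.exp τ ≤ (Real.exp τ)⁻¹ * Real.exp τ :=
        mul_le_mul_of_nonneg_right h2 (Real.exp_pos τ).le
      rw [inv_mul_cancel₀ (Real.exp_pos τ).ne'] at h3
      nlinarith
    have hτT : τ ≤ c * R / p := by
      rw [hτdef, div_le_div_iff₀ hp hp]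
      nlinarith [mul_le_mul_of_nonneg_right (mul_le_mul_of_nonneg_left hhR hc.le) hp.le]
    have h4 : τ * Real.exp τ ≤ τ * Real.exp (c * R / p) :=
      mul_le_mul_of_nonneg_left (Real.exp_le_exp.2 hτT) hτ0.le
    calc Real.exp τ - 1 ≤ τ * Real.exp (c * R / p) := le_trans h1 h4
      _ = c / p * Real.exp (c * R / p) * h := by rw [hτdef]; ring
  -- one-dimensional Lipschitz lemma
  have key : ∀ (p : ℝ), 0 < p → ∀ (W : ℝ → ℝ),
      (∀ t ∈ Set.Icc (0:ℝ) R, 0 ≤ W t ∧ W t ≤ M') →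
      (∀ t h : ℝ, 0 ≤ t → 0 < h →
        0 ≤ W (t + h) - W t ∧ W (t + h) - W t ≤ (Real.exp (c * h / p) - 1) * W t) →
      ∀ s ∈ Set.Icc (0:ℝ) R, ∀ t ∈ Set.Icc (0:ℝ) R,
        |W s - W t| ≤ (c / p * Real.exp (c * R / p) * M') * |s - t| := by
    intro p hp W hWbd hWinc
    have main : ∀ s ∈ Set.Icc (0:ℝ) R, ∀ t ∈ Set.Icc (0:ℝ) R, t ≤ s →
        |W s - W t| ≤ (c / p * Real.exp (c * R / p) * M') * |s - t| := by
      intro s hs t ht hts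
      rcases eq_or_lt_of_le hts with heq | hlt
      · subst heq; simp
      · have hh : 0 < s - t := sub_pos.2 hlt
        obtain ⟨hlo, hhi⟩ := hWinc t (s - t) ht.1 hh
        rw [add_sub_cancel] at hlo hhi
        have hWt := hWbd t ht
        have hle : W s - W t ≤ (c / p * Real.exp (c * R / p) * M') * (s - t) := by
          have hE : Real.exp (c * (s - t) / p) - 1 ≤ c / p * Real.exp (c * R / p) * (s - t) :=
            hexp p hp (s - t) hh (by linarith [hs.2, ht.1])
          have hE0 : 0 ≤ Real.exp (c * (s - t) / p) - 1 := by
            have : (1:ℝ) ≤ Real.exp (c * (s - t) / p) := Real.one_le_exp (by positivity)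
            linarith
          calc W s - W t ≤ (Real.exp (c * (s - t) / p) - 1) * W t := hhi
            _ ≤ (Real.exp (c * (s - t) / p) - 1) * M' :=
                mul_le_mul_of_nonneg_left hWt.2 hE0
            _ ≤ (c / p * Real.exp (c * R / p) * (s - t)) * M' :=
                mul_le_mul_of_nonneg_right hE hM'0
            _ = (c / p * Real.exp (c * R / p) * M') * (s - t) := by ring
        rw [abs_of_nonneg hlo, abs_of_pos hh]
        exact hle
    intro s hs t ht
    rcases le_total t s with h | h
    · exact main s hs t ht h
    · rw [abs_sub_comm (W s), abs_sub_comm s]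
      exact main t ht s hs h
  -- constants
  set L₁ : ℝ := c / p₁ * Real.exp (c * R / p₁) * M' with hL₁
  set L₂ : ℝ := c / p₂ * Real.exp (c * R / p₂) * M' with hL₂
  have hL₁0 : 0 ≤ L₁ := by positivity
  have hL₂0 : 0 ≤ L₂ := by positivity
  refine ⟨max L₁ L₂, le_trans hL₁0 (le_max_left _ _), ?_⟩
  intro q hq q' hq'
  obtain ⟨hq1, hq2⟩ := hbox q hq
  obtain ⟨hq1', hq2'⟩ := hbox q' hq'
  -- x-direction step, at height q.2
  have step1 : |V q.1 q.2 - V q'.1 q.2| ≤ L₁ * |q.1 - q'.1| := by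
    apply key p₁ hp₁ (fun t => V t q.2)
    · intro t ht
      exact ⟨hnonneg t q.2 ht.1 hq2.1, hMV t q.2 ht hq2⟩
    · intro t h ht hh
      obtain ⟨hlo, hhi⟩ := hincx t q.2 h ht hq2.1 hh
      exact ⟨le_trans (by positivity) hlo, hhi⟩
    · exact hq1
    · exact hq1'
  -- y-direction step, at x = q'.1
  have step2 : |V q'.1 q.2 - V q'.1 q'.2| ≤ L₂ * |q.2 - q'.2| := by
    apply key p₂ hp₂ (fun t => V q'.1 t)
    · intro t ht
      exact ⟨hnonneg q'.1 t hq1'.1 ht.1, hMV q'.1 t hq1' ht⟩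
    · intro t h ht hh
      obtain ⟨hlo, hhi⟩ := hincy q'.1 t h hq1'.1 ht hh
      exact ⟨le_trans (by positivity) hlo, hhi⟩
    · exact hq2
    · exact hq2'
  have habs : |V q.1 q.2 - V q'.1 q'.2| ≤
      |V q.1 q.2 - V q'.1 q.2| + |V q'.1 q.2 - V q'.1 q'.2| := by
    have := abs_sub_abs_le_abs_sub (V q.1 q.2) (V q'.1 q'.2)
    calc |V q.1 q.2 - V q'.1 q'.2|
        = |(V q.1 q.2 - V q'.1 q.2) + (V q'.1 q.2 - V q'.1 q'.2)| := by ring_nf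
      _ ≤ _ := abs_add_le _ _
  have h1 : L₁ * |q.1 - q'.1| ≤ max L₁ L₂ * |q.1 - q'.1| :=
    mul_le_mul_of_nonneg_right (le_max_left _ _) (abs_nonneg _)
  have h2 : L₂ * |q.2 - q'.2| ≤ max L₁ L₂ * |q.2 - q'.2| :=
    mul_le_mul_of_nonneg_right (le_max_right _ _) (abs_nonneg _)
  calc |V q.1 q.2 - V q'.1 q'.2|
      ≤ |V q.1 q.2 - V q'.1 q.2| + |V q'.1 q.2 - V q'.1 q'.2| := habs
    _ ≤ L₁ * |q.1 - q'.1| + L₂ * |q.2 - q'.2| := add_le_add step1 step2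
    _ ≤ max L₁ L₂ * |q.1 - q'.1| + max L₁ L₂ * |q.2 - q'.2| := add_le_add h1 h2
    _ = max L₁ L₂ * (|q.1 - q'.1| + |q.2 - q'.2|) := by ring
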